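/- arXiv:2105.08465 — 3 statements merged into one kernel-verified Lean document; each statement's English description precedes it below -/
import Mathlib

section
/- For ϑ ∈ (0,1), C > 0, α ∈ ℝ, and φ(r) = C·r^ϑ·|log r|^α, there exists δ > 0 such that for all r ∈ (0, δ): ∫₀^r φ(s)/s ds ≤ ((1+ϑ)/ϑ)·φ(r) and r·∫_r^{r₀} φ(s)/s² ds ≤ ((2-ϑ)/(1-ϑ))·φ(r), where r₀ ∈ (0, 1/2) is fixed with δ < r₀. -/
open MeasureTheory Set Filter

lemma auxZ_hasDerivAt (p q : ℝ) {s : ℝ} (hs : 0 < s) (hs1 : s < 1) :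
    HasDerivAt (fun t : ℝ => t ^ p * (-Real.log t) ^ q)
      (s ^ (p - 1) * (-Real.log s) ^ (q - 1) * (p * (-Real.log s) - q)) s := by
  have hL : 0 < -Real.log s := by have := Real.log_neg hs hs1; linarith
  have h1 : HasDerivAt (fun t : ℝ => t ^ p) (p * s ^ (p - 1)) s :=
    Real.hasDerivAt_rpow_const (Or.inl hs.ne')
  have h2 : HasDerivAt (fun t : ℝ => -Real.log t) (-s⁻¹) s := (Real.hasDerivAt_log hs.ne').neg
  have h3 : HasDerivAt (fun t : ℝ => (-Real.log t) ^ q)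
      (-s⁻¹ * q * (-Real.log s) ^ (q - 1)) s := h2.rpow_const (Or.inl hL.ne')
  have h4 := h1.mul h3
  refine h4.congr_deriv ?_
  have e1 : s ^ p * s⁻¹ = s ^ (p - 1) := by
    rw [← Real.rpow_neg_one s, ← Real.rpow_add hs]; ring_nf
  have e2 : (-Real.log s) ^ q = (-Real.log s) ^ (q - 1) * (-Real.log s) := by
    rw [← Real.rpow_add_one hL.ne']; ring_nf
  rw [e2]
  linear_combination (-(q * (-Real.log s) ^ (q - 1))) * e1

lemma auxZ_cont (p q a b : ℝ) :
    ContinuousOn (fun s : ℝ => s ^ p * (-Real.log s) ^ q * (a * (-Real.log s) + b))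
      (Set.Ioo (0:ℝ) 1) := by
  have hlog : ContinuousOn (fun s : ℝ => -Real.log s) (Set.Ioo (0:ℝ) 1) :=
    (Real.continuousOn_log.mono (fun x hx => ne_of_gt hx.1)).neg
  have hL : ∀ x ∈ Set.Ioo (0:ℝ) 1, (0:ℝ) < -Real.log x := fun x hx => by
    have := Real.log_neg hx.1 hx.2; linarith
  refine ContinuousOn.mul (ContinuousOn.mul ?_ ?_) ?_
  · exact ContinuousOn.rpow_const (continuousOn_id) (fun x hx => Or.inl (ne_of_gt hx.1))
  · exact hlog.rpow_const (fun x hx => Or.inl (ne_of_gt (hL x hx)))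
  · exact ((continuousOn_const.mul hlog).add continuousOn_const)

lemma auxZ_cont_f (C ϑ α : ℝ) (n : ℕ) :
    ContinuousOn (fun s : ℝ => C * s ^ ϑ * |Real.log s| ^ α / s ^ n)
      (Set.Ioo (0:ℝ) 1) := by
  have hlog : ContinuousOn (fun s : ℝ => |Real.log s|) (Set.Ioo (0:ℝ) 1) :=
    (Real.continuousOn_log.mono (fun x hx => ne_of_gt hx.1)).abs
  refine ContinuousOn.div ?_ ?_ ?_
  · refine ContinuousOn.mul (continuousOn_const.mul ?_) ?_
    · exact ContinuousOn.rpow_const (continuousOn_id) (fun x hx => Or.inl (ne_of_gt hx.1))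
    · refine hlog.rpow_const (fun x hx => Or.inl ?_)
      have := Real.log_neg hx.1 hx.2
      simp only [abs_ne_zero]; linarith
  · exact (continuousOn_id).pow n
  · exact fun x hx => pow_ne_zero n (ne_of_gt hx.1)

lemma auxZ_tendsto (q β : ℝ) (hq : 0 < q) :
    Tendsto (fun r : ℝ => r ^ q * (-Real.log r) ^ β) (nhdsWithin 0 (Set.Ioi 0)) (nhds 0) := by
  have h := tendsto_rpow_mul_exp_neg_mul_atTop_nhds_zero β q hq
  have hlog : Tendsto (fun r : ℝ => -Real.log r) (nhdsWithin 0 (Set.Ioi 0)) atTop := by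
    have := Real.tendsto_log_nhdsGT_zero
    exact tendsto_neg_atBot_atTop.comp this
  have h2 := h.comp hlog
  refine h2.congr' ?_
  filter_upwards [self_mem_nhdsWithin] with r hr
  simp only [Function.comp]
  rw [show -q * -Real.log r = Real.log r * q by ring, ← Real.rpow_def_of_pos hr]
  ring

lemma auxZ_ftc_le {f g g' : ℝ → ℝ} {a b K : ℝ} (hab : a ≤ b)
    (hderiv : ∀ x ∈ Set.Icc a b, HasDerivAt g (g' x) x)
    (hint : IntervalIntegrable g' MeasureTheory.volume a b)
    (hf : IntervalIntegrable f MeasureTheory.volume a b)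
    (hle : ∀ x ∈ Set.Icc a b, f x ≤ K * g' x) :
    (∫ x in a..b, f x) ≤ K * (g b - g a) := by
  have h1 : (∫ x in a..b, f x) ≤ ∫ x in a..b, K * g' x :=
    intervalIntegral.integral_mono_on hab hf (hint.const_mul K) hle
  have h2 : (∫ x in a..b, g' x) = g b - g a := by
    apply intervalIntegral.integral_eq_sub_of_hasDerivAt
    · intro x hx
      exact hderiv x (by rwa [Set.uIcc_of_le hab] at hx)
    · exact hint
  calc (∫ x in a..b, f x) ≤ ∫ x in a..b, K * g' x := h1
    _ = K * ∫ x in a..b, g' x := intervalIntegral.integral_const_mul K g'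
    _ = K * (g b - g a) := by rw [h2]

lemma auxZ_eq1 (C ϑ α : ℝ) {s : ℝ} (hs : 0 < s) (hs1 : s < 1) :
    C * s ^ ϑ * |Real.log s| ^ α / s
      = C * (s ^ (ϑ - 1) * (-Real.log s) ^ α) := by
  rw [abs_of_neg (Real.log_neg hs hs1), Real.rpow_sub hs, Real.rpow_one]
  field_simp

lemma auxZ_eq2 (C ϑ α : ℝ) {s : ℝ} (hs : 0 < s) (hs1 : s < 1) :
    C * s ^ ϑ * |Real.log s| ^ α / s ^ 2
      = C * (s ^ (ϑ - 2) * (-Real.log s) ^ α) := by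
  rw [abs_of_neg (Real.log_neg hs hs1), Real.rpow_sub hs,
    show ((2:ℝ) : ℝ) = ((2:ℕ) : ℝ) by norm_num, Real.rpow_natCast]
  field_simp

set_option maxHeartbeats 1000000 in
theorem stmt3 (C ϑ α r₀ : ℝ) (hC : 0 < C) (hϑ : ϑ ∈ Set.Ioo (0:ℝ) 1)
    (hr₀ : r₀ ∈ Set.Ioo (0:ℝ) (1/2)) :
    ∃ δ > (0:ℝ), δ < r₀ ∧ ∀ r ∈ Set.Ioo (0:ℝ) δ,
      (∫ s in (0:ℝ)..r, (C * s ^ ϑ * |Real.log s| ^ α) / s) ≤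
        ((1 + ϑ) / ϑ) * (C * r ^ ϑ * |Real.log r| ^ α) ∧
      r * (∫ s in r..r₀, (C * s ^ ϑ * |Real.log s| ^ α) / s ^ 2) ≤
        ((2 - ϑ) / (1 - ϑ)) * (C * r ^ ϑ * |Real.log r| ^ α) := by
  obtain ⟨hϑ0, hϑ1⟩ := hϑ
  obtain ⟨hr₀0, hr₀h⟩ := hr₀
  have h1ϑ : (0:ℝ) < 1 - ϑ := by linarith
  set T : ℝ := (3*|α|+1) / ϑ^2 + (3*|α|+1) / (1-ϑ)^2 with hTdef
  have habs : (0:ℝ) ≤ |α| := abs_nonneg α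
  have hT1 : 1 ≤ T := by
    have h1 : (3*|α|+1) ≤ (3*|α|+1) / ϑ^2 := by
      rw [le_div_iff₀ (by positivity)]
      nlinarith [mul_nonneg (by linarith : (0:ℝ) ≤ 3*|α|+1)
        (by nlinarith : (0:ℝ) ≤ 1 - ϑ^2)]
    have h2 : (0:ℝ) ≤ (3*|α|+1) / (1-ϑ)^2 := by positivity
    rw [hTdef]; linarith
  have hTϑ : 3*|α|+1 ≤ ϑ^2 * T := by
    have e : ϑ^2 * ((3*|α|+1) / ϑ^2) = 3*|α|+1 := by field_simp
    have h2 : (0:ℝ) ≤ ϑ^2 * ((3*|α|+1) / (1-ϑ)^2) := by positivity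
    rw [hTdef]; nlinarith
  have hTϑ' : 3*|α|+1 ≤ (1-ϑ)^2 * T := by
    have e : (1-ϑ)^2 * ((3*|α|+1) / (1-ϑ)^2) = 3*|α|+1 := by field_simp
    have h2 : (0:ℝ) ≤ (1-ϑ)^2 * ((3*|α|+1) / ϑ^2) := by positivity
    rw [hTdef]; nlinarith
  set δ₁ : ℝ := min (Real.exp (-T)) (r₀/2) with hδ₁def
  have hδ₁0 : 0 < δ₁ := lt_min (Real.exp_pos _) (by linarith)
  have hδ₁r₀ : δ₁ < r₀ := lt_of_le_of_lt (min_le_right _ _) (by linarith)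
  have hδ₁half : δ₁ < 1/2 := by
    have h1 : δ₁ ≤ Real.exp (-T) := min_le_left _ _
    have h2 : Real.exp (-T) ≤ Real.exp (-1) := Real.exp_le_exp.mpr (by linarith)
    have h3 : Real.exp (-1) < 1/2 := by
      rw [Real.exp_neg]
      rw [inv_lt_comm₀ (Real.exp_pos 1) (by norm_num)]
      calc (1/2:ℝ)⁻¹ = 2 := by norm_num
        _ < Real.exp 1 := by
          have := Real.add_one_le_exp 1
          nlinarith [Real.exp_pos 1, Real.exp_one_gt_d9]
    linarith
  have hLbound : ∀ s : ℝ, 0 < s → s ≤ δ₁ → T ≤ -Real.log s := by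
    intro s hs hsle
    have h1 : Real.log s ≤ Real.log (Real.exp (-T)) :=
      Real.log_le_log hs (le_trans hsle (min_le_left _ _))
    rw [Real.log_exp] at h1
    linarith
  -- pointwise key inequalities
  have hkey1 : ∀ x : ℝ, 0 < x → x ≤ δ₁ →
      C * x ^ ϑ * |Real.log x| ^ α / x ≤
        ((1+ϑ)/ϑ * C) * (x ^ (ϑ-1) * (-Real.log x) ^ (α-1) * (ϑ * (-Real.log x) - α)) := by
    intro x hx hxδ
    have hx1 : x < 1 := by linarith [lt_of_le_of_lt hxδ hδ₁half]
    have hL : T ≤ -Real.log x := hLbound x hx hxδ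
    have hL0 : 0 < -Real.log x := by linarith
    rw [auxZ_eq1 C ϑ α hx hx1]
    have eL : (-Real.log x) ^ α = (-Real.log x) ^ (α-1) * (-Real.log x) := by
      rw [← Real.rpow_add_one hL0.ne']; ring_nf
    rw [eL]
    have hxp : 0 ≤ x ^ (ϑ-1) := Real.rpow_nonneg hx.le _
    have hLp : 0 ≤ (-Real.log x) ^ (α-1) := Real.rpow_nonneg hL0.le _
    have hmain : -Real.log x ≤ (1+ϑ)/ϑ * (ϑ * (-Real.log x) - α) := by
      rw [div_mul_eq_mul_div, le_div_iff₀ hϑ0]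
      nlinarith [le_abs_self α, neg_abs_le α, mul_le_mul_of_nonneg_left hL (sq_nonneg ϑ)]
    have h2 := mul_le_mul_of_nonneg_left hmain
      (mul_nonneg hC.le (mul_nonneg hxp hLp))
    refine le_trans (le_of_eq ?_) (le_trans h2 (le_of_eq ?_)) <;> ring
  have hkey2 : ∀ x : ℝ, 0 < x → x ≤ δ₁ →
      C * x ^ ϑ * |Real.log x| ^ α / x ^ 2 ≤
        ((3-ϑ)/(2*(1-ϑ)) * C) *
          (x ^ (ϑ-2) * (-Real.log x) ^ (α-1) * ((1-ϑ) * (-Real.log x) + α)) := by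
    intro x hx hxδ
    have hx1 : x < 1 := by linarith [lt_of_le_of_lt hxδ hδ₁half]
    have hL : T ≤ -Real.log x := hLbound x hx hxδ
    have hL0 : 0 < -Real.log x := by linarith
    rw [auxZ_eq2 C ϑ α hx hx1]
    have eL : (-Real.log x) ^ α = (-Real.log x) ^ (α-1) * (-Real.log x) := by
      rw [← Real.rpow_add_one hL0.ne']; ring_nf
    rw [eL]
    have hxp : 0 ≤ x ^ (ϑ-2) := Real.rpow_nonneg hx.le _
    have hLp : 0 ≤ (-Real.log x) ^ (α-1) := Real.rpow_nonneg hL0.le _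
    have hmain : -Real.log x ≤ (3-ϑ)/(2*(1-ϑ)) * ((1-ϑ) * (-Real.log x) + α) := by
      rw [div_mul_eq_mul_div, le_div_iff₀ (by linarith)]
      nlinarith [le_abs_self α, neg_abs_le α, mul_le_mul_of_nonneg_left hL (sq_nonneg (1-ϑ))]
    have h2 := mul_le_mul_of_nonneg_left hmain
      (mul_nonneg hC.le (mul_nonneg hxp hLp))
    refine le_trans (le_of_eq ?_) (le_trans h2 (le_of_eq ?_)) <;> ring
  -- tail integral
  set M : ℝ := ∫ s in δ₁..r₀, C * s ^ ϑ * |Real.log s| ^ α / s ^ 2 with hMdef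
  have hM0 : 0 ≤ M := by
    apply intervalIntegral.integral_nonneg hδ₁r₀.le
    intro x hx
    have hx0 : 0 < x := lt_of_lt_of_le hδ₁0 hx.1
    positivity
  have hM1 : (0:ℝ) < M + 1 := by linarith
  -- eventual smallness
  have ht := auxZ_tendsto (1-ϑ) (-α) h1ϑ
  have hev : ∀ᶠ r in nhdsWithin 0 (Set.Ioi 0),
      r ^ (1-ϑ) * (-Real.log r) ^ (-α) < C/(2*(M+1)) := by
    apply ht.eventually_lt_const
    positivity
  obtain ⟨ε₀, hε₀, hsub⟩ := mem_nhdsGT_iff_exists_Ioo_subset.mp hev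
  refine ⟨min δ₁ ε₀, lt_min hδ₁0 hε₀, lt_of_le_of_lt (min_le_left _ _) hδ₁r₀, ?_⟩
  rintro r ⟨hr0, hrδ⟩
  have hrδ₁ : r < δ₁ := lt_of_lt_of_le hrδ (min_le_left _ _)
  have hrε₀ : r < ε₀ := lt_of_lt_of_le hrδ (min_le_right _ _)
  have hr1 : r < 1 := by linarith [hδ₁half]
  have hLr : T ≤ -Real.log r := hLbound r hr0 hrδ₁.le
  have hLr0 : 0 < -Real.log r := by linarith
  have hlogr : Real.log r < 0 := by linarith
  have hrϑ : 0 ≤ r ^ ϑ := Real.rpow_nonneg hr0.le _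
  have hLrα : 0 < (-Real.log r) ^ α := Real.rpow_pos_of_pos hLr0 α
  have hIccsub : Set.Icc r δ₁ ⊆ Set.Ioo (0:ℝ) 1 := fun x hx =>
    ⟨lt_of_lt_of_le hr0 hx.1, by linarith [hx.2, hδ₁half]⟩
  constructor
  · -- Part 1
    by_cases hfi : IntervalIntegrable
        (fun s => C * s ^ ϑ * |Real.log s| ^ α / s) volume 0 r
    case neg =>
      rw [intervalIntegral.integral_undef hfi]
      have : 0 ≤ (1 + ϑ) / ϑ * (C * r ^ ϑ * |Real.log r| ^ α) := by
        apply mul_nonneg (by positivity)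
        exact mul_nonneg (mul_nonneg hC.le hrϑ) (Real.rpow_nonneg (abs_nonneg _) _)
      linarith
    case pos =>
      have key : ∀ e ∈ Set.Ioo (0:ℝ) r,
          (∫ s in e..r, C * s ^ ϑ * |Real.log s| ^ α / s) ≤
            (1 + ϑ) / ϑ * (C * r ^ ϑ * |Real.log r| ^ α) := by
        intro e he
        have hIcc' : Set.Icc e r ⊆ Set.Ioo (0:ℝ) 1 := fun x hx =>
          ⟨lt_of_lt_of_le he.1 hx.1, by linarith [hx.2]⟩
        have hderiv : ∀ x ∈ Set.Icc e r,
            HasDerivAt (fun t : ℝ => t ^ ϑ * (-Real.log t) ^ α)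
              (x ^ (ϑ-1) * (-Real.log x) ^ (α-1) * (ϑ * (-Real.log x) - α)) x := by
          intro x hx
          exact auxZ_hasDerivAt ϑ α (hIcc' hx).1 (hIcc' hx).2
        have hintg' : IntervalIntegrable
            (fun x => x ^ (ϑ-1) * (-Real.log x) ^ (α-1) * (ϑ * (-Real.log x) - α))
            volume e r := by
          apply ContinuousOn.intervalIntegrable
          rw [Set.uIcc_of_le he.2.le]
          have := (auxZ_cont (ϑ-1) (α-1) ϑ (-α)).mono hIcc'
          refine this.congr (fun x _ => ?_)
          ring_nf
        have hintf : IntervalIntegrable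
            (fun s => C * s ^ ϑ * |Real.log s| ^ α / s) volume e r := by
          apply hfi.mono_set
          apply Set.uIcc_subset_uIcc
          · rw [Set.uIcc_of_le hr0.le]; exact ⟨he.1.le, he.2.le⟩
          · exact Set.right_mem_uIcc
        have h := auxZ_ftc_le he.2.le hderiv hintg' hintf
          (fun x hx => hkey1 x (hIcc' hx).1 (by linarith [hx.2, hrδ₁.le]))
        have hge : 0 ≤ e ^ ϑ * (-Real.log e) ^ α := by
          apply mul_nonneg (Real.rpow_nonneg he.1.le _)
          exact Real.rpow_nonneg (by nlinarith [Real.log_neg he.1 (by linarith [he.2] : e < 1)]) _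
        have hKC : 0 ≤ (1+ϑ)/ϑ * C := by positivity
        calc (∫ s in e..r, C * s ^ ϑ * |Real.log s| ^ α / s)
            ≤ (1+ϑ)/ϑ * C * (r ^ ϑ * (-Real.log r) ^ α - e ^ ϑ * (-Real.log e) ^ α) := h
          _ ≤ (1+ϑ)/ϑ * C * (r ^ ϑ * (-Real.log r) ^ α) := by nlinarith
          _ = (1 + ϑ) / ϑ * (C * r ^ ϑ * |Real.log r| ^ α) := by
              rw [abs_of_neg hlogr]; ring
      -- limit argument
      have hIcc0r : IntegrableOn (fun s => C * s ^ ϑ * |Real.log s| ^ α / s)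
          (Set.Icc 0 r) volume := by
        rw [integrableOn_Icc_iff_integrableOn_Ioc]
        exact (intervalIntegrable_iff_integrableOn_Ioc_of_le hr0.le).mp hfi
      have hcont := intervalIntegral.continuousOn_primitive_interval
        (μ := volume) (a := (0:ℝ)) (b := r)
        (f := fun s => C * s ^ ϑ * |Real.log s| ^ α / s)
        (by rwa [Set.uIcc_of_le hr0.le])
      have h0 : Tendsto (fun x => ∫ t in (0:ℝ)..x, C * t ^ ϑ * |Real.log t| ^ α / t)
          (nhdsWithin 0 (Set.Icc 0 r)) (nhds 0) := by
        have h := (hcont 0 (by rw [Set.uIcc_of_le hr0.le]; exact ⟨le_refl _, hr0.le⟩))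
        have h2 := h.tendsto
        simpa [Set.uIcc_of_le hr0.le] using h2
      have h0' : Tendsto (fun x => ∫ t in (0:ℝ)..x, C * t ^ ϑ * |Real.log t| ^ α / t)
          (nhdsWithin 0 (Set.Ioo 0 r)) (nhds 0) :=
        h0.mono_left (nhdsWithin_mono _ Set.Ioo_subset_Icc_self)
      have hne : (nhdsWithin (0:ℝ) (Set.Ioo 0 r)).NeBot := left_nhdsWithin_Ioo_neBot hr0
      have hfinal : ∀ᶠ e in nhdsWithin (0:ℝ) (Set.Ioo 0 r),
          (∫ s in (0:ℝ)..r, C * s ^ ϑ * |Real.log s| ^ α / s) -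
            (1 + ϑ) / ϑ * (C * r ^ ϑ * |Real.log r| ^ α) ≤
          ∫ t in (0:ℝ)..e, C * t ^ ϑ * |Real.log t| ^ α / t := by
        filter_upwards [self_mem_nhdsWithin] with e he
        have hsub1 : IntervalIntegrable
            (fun s => C * s ^ ϑ * |Real.log s| ^ α / s) volume 0 e := by
          apply hfi.mono_set
          apply Set.uIcc_subset_uIcc Set.left_mem_uIcc
          rw [Set.uIcc_of_le hr0.le]; exact ⟨he.1.le, he.2.le⟩
        have hsub2 : IntervalIntegrable
            (fun s => C * s ^ ϑ * |Real.log s| ^ α / s) volume e r := by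
          apply hfi.mono_set
          apply Set.uIcc_subset_uIcc _ Set.right_mem_uIcc
          rw [Set.uIcc_of_le hr0.le]; exact ⟨he.1.le, he.2.le⟩
        have hsplit := intervalIntegral.integral_add_adjacent_intervals hsub1 hsub2
        have hk := key e he
        linarith [hsplit]
      have hfin := ge_of_tendsto h0' hfinal
      linarith
  · -- Part 2
    have hub2 : Set.uIcc r δ₁ ⊆ Set.Ioo (0:ℝ) 1 := by
      rw [Set.uIcc_of_le hrδ₁.le]; exact hIccsub
    have hub3 : Set.uIcc δ₁ r₀ ⊆ Set.Ioo (0:ℝ) 1 := by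
      rw [Set.uIcc_of_le hδ₁r₀.le]
      intro x hx; exact ⟨lt_of_lt_of_le hδ₁0 hx.1, by linarith [hx.2]⟩
    have hint_rδ : IntervalIntegrable
        (fun s => C * s ^ ϑ * |Real.log s| ^ α / s ^ 2) volume r δ₁ :=
      ((auxZ_cont_f C ϑ α 2).mono hub2).intervalIntegrable
    have hint_δr : IntervalIntegrable
        (fun s => C * s ^ ϑ * |Real.log s| ^ α / s ^ 2) volume δ₁ r₀ :=
      ((auxZ_cont_f C ϑ α 2).mono hub3).intervalIntegrable
    have hsplit := intervalIntegral.integral_add_adjacent_intervals hint_rδ hint_δr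
    have hderiv2 : ∀ x ∈ Set.Icc r δ₁,
        HasDerivAt (fun t : ℝ => -(t ^ (ϑ-1) * (-Real.log t) ^ α))
          (x ^ (ϑ-2) * (-Real.log x) ^ (α-1) * ((1-ϑ) * (-Real.log x) + α)) x := by
      intro x hx
      have h := (auxZ_hasDerivAt (ϑ-1) α (hIccsub hx).1 (hIccsub hx).2).neg
      refine h.congr_deriv ?_
      rw [show ϑ - 1 - 1 = ϑ - 2 from by ring]
      ring
    have hintg2' : IntervalIntegrable
        (fun x => x ^ (ϑ-2) * (-Real.log x) ^ (α-1) * ((1-ϑ) * (-Real.log x) + α))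
        volume r δ₁ := by
      apply ContinuousOn.intervalIntegrable
      exact (auxZ_cont (ϑ-2) (α-1) (1-ϑ) α).mono hub2
    have h2 := auxZ_ftc_le hrδ₁.le hderiv2 hintg2' hint_rδ
      (fun x hx => hkey2 x (hIccsub hx).1 hx.2)
    -- h2 : ∫ r..δ₁ ≤ K*C * (-(δ₁^(ϑ-1)*Lδ₁^α) - -(r^(ϑ-1)*Lr^α))
    have hgδ : 0 ≤ δ₁ ^ (ϑ-1) * (-Real.log δ₁) ^ α := by
      apply mul_nonneg (Real.rpow_nonneg hδ₁0.le _)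
      exact Real.rpow_nonneg (by nlinarith [Real.log_neg hδ₁0 (by linarith : δ₁ < 1)]) _
    have hKC : (0:ℝ) ≤ (3-ϑ)/(2*(1-ϑ)) * C :=
      mul_nonneg (div_nonneg (by linarith) (by linarith)) hC.le
    have h3 : (∫ s in r..δ₁, C * s ^ ϑ * |Real.log s| ^ α / s ^ 2) ≤
        (3-ϑ)/(2*(1-ϑ)) * C * (r ^ (ϑ-1) * (-Real.log r) ^ α) := by
      calc (∫ s in r..δ₁, C * s ^ ϑ * |Real.log s| ^ α / s ^ 2)
          ≤ (3-ϑ)/(2*(1-ϑ)) * C *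
            (-(δ₁ ^ (ϑ-1) * (-Real.log δ₁) ^ α) - -(r ^ (ϑ-1) * (-Real.log r) ^ α)) := h2
        _ ≤ (3-ϑ)/(2*(1-ϑ)) * C * (r ^ (ϑ-1) * (-Real.log r) ^ α) := by nlinarith
    have hrr : r * r ^ (ϑ-1) = r ^ ϑ := by
      rw [show r * r ^ (ϑ-1) = r ^ (1:ℝ) * r ^ (ϑ-1) by rw [Real.rpow_one],
        ← Real.rpow_add hr0]
      norm_num
    -- tail bound
    have h6 := hsub ⟨hr0, hrε₀⟩
    simp only [Set.mem_setOf_eq] at h6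
    have h6' : r ^ (1-ϑ) * ((-Real.log r) ^ α)⁻¹ < C/(2*(M+1)) := by
      rwa [Real.rpow_neg hLr0.le] at h6
    have h5 : r ^ (1-ϑ) ≤ C/(2*(M+1)) * (-Real.log r) ^ α := by
      calc r ^ (1-ϑ) = r ^ (1-ϑ) * ((-Real.log r) ^ α)⁻¹ * (-Real.log r) ^ α := by
            field_simp
        _ ≤ C/(2*(M+1)) * (-Real.log r) ^ α :=
            mul_le_mul_of_nonneg_right h6'.le hLrα.le
    have h7 : r = r ^ (1-ϑ) * r ^ ϑ := by
      rw [← Real.rpow_add hr0]; norm_num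
    have htail : r * M ≤ 1/2 * C * (r ^ ϑ * (-Real.log r) ^ α) := by
      have h8 : M * r ^ (1-ϑ) ≤ (M+1) * (C/(2*(M+1)) * (-Real.log r) ^ α) := by
        have := mul_le_mul (le_of_lt (lt_add_one M)) h5
          (Real.rpow_nonneg hr0.le _) hM1.le
        linarith [this]
      have h9 : (M+1) * (C/(2*(M+1)) * (-Real.log r) ^ α) =
          1/2 * C * (-Real.log r) ^ α := by
        field_simp
      calc r * M = M * r ^ (1-ϑ) * r ^ ϑ := by
            conv_lhs => rw [h7]
            ring
        _ ≤ 1/2 * C * (-Real.log r) ^ α * r ^ ϑ := by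
            rw [← h9]
            exact mul_le_mul_of_nonneg_right h8 hrϑ
        _ = 1/2 * C * (r ^ ϑ * (-Real.log r) ^ α) := by ring
    rw [← hsplit, ← hMdef]
    rw [abs_of_neg hlogr]
    have h10 : r * (∫ s in r..δ₁, C * s ^ ϑ * |Real.log s| ^ α / s ^ 2) ≤
        (3-ϑ)/(2*(1-ϑ)) * C * (r ^ ϑ * (-Real.log r) ^ α) := by
      calc r * (∫ s in r..δ₁, C * s ^ ϑ * |Real.log s| ^ α / s ^ 2)
          ≤ r * ((3-ϑ)/(2*(1-ϑ)) * C * (r ^ (ϑ-1) * (-Real.log r) ^ α)) :=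
            mul_le_mul_of_nonneg_left h3 hr0.le
        _ = (3-ϑ)/(2*(1-ϑ)) * C * ((r * r ^ (ϑ-1)) * (-Real.log r) ^ α) := by ring
        _ = (3-ϑ)/(2*(1-ϑ)) * C * (r ^ ϑ * (-Real.log r) ^ α) := by rw [hrr]
    have hfinal2 : (3-ϑ)/(2*(1-ϑ)) * C * (r ^ ϑ * (-Real.log r) ^ α) +
        1/2 * C * (r ^ ϑ * (-Real.log r) ^ α) =
        (2-ϑ)/(1-ϑ) * (C * r ^ ϑ * (-Real.log r) ^ α) := by
      field_simp; ring
    calc r * ((∫ s in r..δ₁, C * s ^ ϑ * |Real.log s| ^ α / s ^ 2) + M)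
        = r * (∫ s in r..δ₁, C * s ^ ϑ * |Real.log s| ^ α / s ^ 2) + r * M := by ring
      _ ≤ (3-ϑ)/(2*(1-ϑ)) * C * (r ^ ϑ * (-Real.log r) ^ α) +
          1/2 * C * (r ^ ϑ * (-Real.log r) ^ α) := add_le_add h10 htail
      _ = (2-ϑ)/(1-ϑ) * (C * r ^ ϑ * (-Real.log r) ^ α) := hfinal2
end

section
/- Let φ(r) = C·|log r|^{-α} for r ∈ (0, 1/2) with α > 1 and C > 0. Then there exist positive constants C₁(α), C₂(α) such that for all sufficiently small ρ > 0: C₁/|log ρ|^{α-1} ≤ ∫₀^ρ φ(r)/r dr + ρ·∫_ρ^{1/2} φ(r)/r² dr ≤ C₂/|log ρ|^{α-1}. -/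
open MeasureTheory Set Filter

-- derivative lemma
lemma hasDerivF (C α : ℝ) (hα : 1 < α) {r : ℝ} (hr : r ∈ Set.Ioo (0:ℝ) 1) :
    HasDerivAt (fun x => C / (α-1) * (-Real.log x) ^ (1-α))
      (C * |Real.log r| ^ (-α) / r) r := by
  have hr0 : 0 < r := hr.1
  have hlog : Real.log r < 0 := Real.log_neg hr0 hr.2
  have hl0 : 0 < -Real.log r := by linarith
  have h1 : HasDerivAt (fun x => -Real.log x) (-r⁻¹) r :=
    (Real.hasDerivAt_log hr0.ne').neg
  have h2 : HasDerivAt (fun y : ℝ => y ^ (1-α)) ((1-α) * (-Real.log r) ^ (1-α-1)) (-Real.log r) :=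
    Real.hasDerivAt_rpow_const (Or.inl hl0.ne')
  have h3 := (h2.comp r h1).const_mul (C / (α-1))
  refine h3.congr_deriv ?_
  have : |Real.log r| = -Real.log r := abs_of_neg hlog
  rw [this]
  have he : (1-α-1) = -α := by ring
  rw [he]
  have hα1 : α - 1 ≠ 0 := by intro h; linarith [sub_eq_zero.mp h]
  field_simp
  ring

-- continuity of the integrand on compact subsets of (0,1)
lemma contOn (C α : ℝ) {a b : ℝ} (ha : 0 < a) (hb : b < 1) :
    ContinuousOn (fun r => C * |Real.log r| ^ (-α) / r) (Set.Icc a b) := by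
  apply ContinuousOn.div
  · apply ContinuousOn.mul continuousOn_const
    apply ContinuousOn.rpow_const
    · exact (Real.continuousOn_log.mono (by intro x hx; simp; intro h; rw [h] at hx; exact absurd hx.1 (by simpa using ha))).abs
    · intro x hx
      left
      have hx0 : 0 < x := lt_of_lt_of_le ha hx.1
      have : Real.log x < 0 := Real.log_neg hx0 (lt_of_le_of_lt hx.2 hb)
      exact abs_ne_zero.mpr (ne_of_lt this)
  · exact continuousOn_id
  · intro x hx; exact (lt_of_lt_of_le ha hx.1).ne'

lemma ftc_aux (C α : ℝ) (hα : 1 < α) {a b : ℝ} (ha : 0 < a) (hab : a ≤ b) (hb : b < 1) :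
    ∫ r in a..b, C * |Real.log r| ^ (-α) / r
      = C / (α-1) * (-Real.log b) ^ (1-α) - C / (α-1) * (-Real.log a) ^ (1-α) := by
  apply intervalIntegral.integral_eq_sub_of_hasDerivAt
  · intro x hx
    rw [Set.uIcc_of_le hab] at hx
    exact hasDerivF C α hα ⟨lt_of_lt_of_le ha hx.1, lt_of_le_of_lt hx.2 hb⟩
  · exact (contOn C α ha hb).intervalIntegrable_of_Icc hab

lemma improper (C α : ℝ) (hC : 0 < C) (hα : 1 < α) {b : ℝ} (hb0 : 0 < b) (hb1 : b < 1) :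
    IntegrableOn (fun r => C * |Real.log r| ^ (-α) / r) (Set.Ioc (0:ℝ) b) ∧
    ∫ r in (0:ℝ)..b, C * |Real.log r| ^ (-α) / r = C / (α-1) * (-Real.log b) ^ (1-α) := by
  set f : ℝ → ℝ := fun r => C * |Real.log r| ^ (-α) / r with hf
  set F : ℝ → ℝ := fun r => C / (α-1) * (-Real.log r) ^ (1-α) with hF
  have hα1 : 0 < α - 1 := by linarith
  have hCα : 0 ≤ C / (α-1) := by positivity
  have hFnn : ∀ r ∈ Set.Ioo (0:ℝ) 1, 0 ≤ F r := by
    intro r hr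
    have : Real.log r < 0 := Real.log_neg hr.1 hr.2
    exact mul_nonneg hCα (Real.rpow_nonneg (by linarith) _)
  -- the approximating sequence
  set a : ℕ → ℝ := fun n => b / (n+1) with haseq
  have ha_pos : ∀ n, 0 < a n := fun n => by positivity
  have ha_le : ∀ n, a n ≤ b := by
    intro n
    rw [haseq]
    rw [div_le_iff₀ (by positivity)]
    nlinarith [hb0, Nat.cast_nonneg (α := ℝ) n]
  have ha_mem : ∀ n, a n ∈ Set.Ioo (0:ℝ) 1 :=
    fun n => ⟨ha_pos n, lt_of_le_of_lt (ha_le n) hb1⟩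
  have ha_tendsto : Tendsto a atTop (nhds (0:ℝ)) := by
    have h1 : Tendsto (fun n : ℕ => b / (n:ℝ)) atTop (nhds 0) :=
      tendsto_const_div_atTop_nhds_zero_nat b
    have := h1.comp (tendsto_add_atTop_nat 1)
    refine this.congr (fun n => ?_)
    simp [Function.comp, haseq]
  have hfi : ∀ n, IntegrableOn f (Set.Ioc (a n) b) := by
    intro n
    rw [← intervalIntegrable_iff_integrableOn_Ioc_of_le (ha_le n)]
    exact (contOn C α (ha_pos n) hb1).intervalIntegrable_of_Icc (ha_le n)
  have hfnn : ∀ r ∈ Set.Ioc (0:ℝ) b, 0 ≤ f r := by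
    intro r hr
    have hr0 : 0 < r := hr.1
    exact div_nonneg (mul_nonneg hC.le (Real.rpow_nonneg (abs_nonneg _) _)) hr0.le
  have hval : ∀ n, ∫ x in Set.Ioc (a n) b, f x = F b - F (a n) := by
    intro n
    rw [← intervalIntegral.integral_of_le (ha_le n)]
    exact ftc_aux C α hα (ha_pos n) (ha_le n) hb1
  have hbound : ∀ n, (∫ x in Set.Ioc (a n) b, ‖f x‖) ≤ F b := by
    intro n
    have : ∀ x ∈ Set.Ioc (a n) b, ‖f x‖ = f x := by
      intro x hx
      exact Real.norm_of_nonneg (hfnn x ⟨lt_of_lt_of_le (ha_pos n) hx.1.le, hx.2⟩)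
    rw [setIntegral_congr_fun measurableSet_Ioc this, hval n]
    have := hFnn (a n) (ha_mem n)
    linarith
  have hint : IntegrableOn f (Set.Ioc (0:ℝ) b) :=
    MeasureTheory.integrableOn_Ioc_of_intervalIntegral_norm_bounded_left hfi ha_tendsto
      (Filter.Eventually.of_forall hbound)
  refine ⟨hint, ?_⟩
  -- value via AECover
  have hφ : AECover (volume.restrict (Set.Ioc (0:ℝ) b)) atTop (fun n => Set.Ioc (a n) b) :=
    MeasureTheory.aecover_Ioc_of_Ioc ha_tendsto tendsto_const_nhds
  have htend := hφ.integral_tendsto_of_countably_generated hint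
  have heq : ∀ n, ∫ x in Set.Ioc (a n) b, f x ∂(volume.restrict (Set.Ioc (0:ℝ) b))
      = F b - F (a n) := by
    intro n
    rw [Measure.restrict_restrict measurableSet_Ioc]
    have : Set.Ioc (a n) b ∩ Set.Ioc (0:ℝ) b = Set.Ioc (a n) b := by
      apply Set.inter_eq_self_of_subset_left
      exact Set.Ioc_subset_Ioc_left (ha_pos n).le
    rw [this]
    exact hval n
  have htend2 : Tendsto (fun n => F b - F (a n)) atTop (nhds (∫ x in Set.Ioc (0:ℝ) b, f x)) := by
    refine htend.congr heq
  -- F (a n) → 0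
  have hFa : Tendsto (fun n => F (a n)) atTop (nhds 0) := by
    have hlog : Tendsto (fun n => -Real.log (a n)) atTop atTop := by
      have := Real.tendsto_log_nhdsGT_zero.comp
        (tendsto_nhdsWithin_iff.mpr ⟨ha_tendsto, Filter.Eventually.of_forall (fun n => ha_pos n)⟩)
      exact tendsto_neg_atBot_atTop.comp this
    have hrp : Tendsto (fun x : ℝ => x ^ (-(α-1))) atTop (nhds 0) :=
      tendsto_rpow_neg_atTop hα1
    have := (hrp.comp hlog).const_mul (C/(α-1))
    simpa [hF, Function.comp, mul_zero, (by ring : -(α-1) = 1-α)] using this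
  have : Tendsto (fun n => F b - F (a n)) atTop (nhds (F b - 0)) :=
    tendsto_const_nhds.sub hFa
  have hfinal : (∫ x in Set.Ioc (0:ℝ) b, f x) = F b := by
    have := tendsto_nhds_unique htend2 this
    rw [this]; ring
  rw [intervalIntegral.integral_of_le hb0.le, hfinal]

lemma contOn2 (C α : ℝ) {a b : ℝ} (ha : 0 < a) (hb : b < 1) :
    ContinuousOn (fun r => C * |Real.log r| ^ (-α) / r ^ 2) (Set.Icc a b) := by
  apply ContinuousOn.div
  · apply ContinuousOn.mul continuousOn_const
    apply ContinuousOn.rpow_const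
    · exact (Real.continuousOn_log.mono (by intro x hx; simp; intro h; rw [h] at hx; exact absurd hx.1 (by simpa using ha))).abs
    · intro x hx
      left
      have hx0 : 0 < x := lt_of_lt_of_le ha hx.1
      have : Real.log x < 0 := Real.log_neg hx0 (lt_of_le_of_lt hx.2 hb)
      exact abs_ne_zero.mpr (ne_of_lt this)
  · exact (continuous_pow 2).continuousOn
  · intro x hx
    exact pow_ne_zero 2 (lt_of_lt_of_le ha hx.1).ne'

lemma ftc_inv_sq (K : ℝ) {a b : ℝ} (ha : 0 < a) (hab : a ≤ b) :
    ∫ r in a..b, K / r ^ 2 = K / a - K / b := by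
  have h : ∫ r in a..b, K / r ^ 2 = (-K * b⁻¹) - (-K * a⁻¹) := by
    apply intervalIntegral.integral_eq_sub_of_hasDerivAt
    · intro x hx
      rw [Set.uIcc_of_le hab] at hx
      have hx0 : 0 < x := lt_of_lt_of_le ha hx.1
      have := (hasDerivAt_inv hx0.ne').const_mul (-K)
      refine this.congr_deriv ?_
      ring
    · apply ContinuousOn.intervalIntegrable_of_Icc hab
      apply ContinuousOn.div continuousOn_const (continuous_pow 2).continuousOn
      intro x hx
      exact pow_ne_zero 2 (lt_of_lt_of_le ha hx.1).ne'
  rw [h]; field_simp; ring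

lemma secondBound (C α : ℝ) (hC : 0 < C) (hα : 1 < α) {ρ : ℝ}
    (hρ0 : 0 < ρ) (hρ14 : ρ < 1/4)
    (hcond : Real.sqrt ρ * |Real.log ρ| ^ (α-1) ≤ Real.log 2 ^ α) :
    ρ * ∫ r in ρ..(1/2:ℝ), C * |Real.log r| ^ (-α) / r ^ 2
      ≤ (C * 2 ^ α + C) * |Real.log ρ| ^ (1-α) := by
  set s := Real.sqrt ρ with hs
  have hs0 : 0 < s := Real.sqrt_pos.mpr hρ0
  have hρ1 : ρ < 1 := by linarith
  have hρs : ρ ≤ s := by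
    nlinarith [Real.sq_sqrt hρ0.le, hs0, hρ1]
  have hs12 : s ≤ 1/2 := by
    have := Real.sqrt_le_sqrt hρ14.le
    rwa [show (1/4:ℝ) = (1/2)^2 by norm_num, Real.sqrt_sq (by norm_num)] at this
  have hlogρ : Real.log ρ < 0 := Real.log_neg hρ0 hρ1
  have habs : |Real.log ρ| = -Real.log ρ := abs_of_neg hlogρ
  set L := -Real.log ρ with hL
  have hL0 : 0 < L := by rw [hL]; linarith
  have hL1 : 1 ≤ L := by
    rw [hL, le_neg]
    have h4 : ρ < Real.exp (-1) := by
      have : (2.7182818286:ℝ) < 4 := by norm_num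
      have he : Real.exp 1 < 4 := lt_trans Real.exp_one_lt_d9 this
      rw [Real.exp_neg]
      calc ρ < 1/4 := hρ14
        _ ≤ (Real.exp 1)⁻¹ := by
            rw [one_div]
            exact inv_anti₀ (Real.exp_pos 1) he.le
    have := Real.log_lt_log hρ0 h4
    rw [Real.log_exp] at this
    linarith
  have hlogs : -Real.log s = L / 2 := by
    rw [hs, Real.log_sqrt hρ0.le, hL]; ring
  have hlog2 : 0 < Real.log 2 := Real.log_pos (by norm_num)
  -- pointwise bounds
  have hint1 : IntervalIntegrable (fun r => C * |Real.log r| ^ (-α) / r ^ 2) volume ρ s :=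
    (contOn2 C α hρ0 (by linarith)).intervalIntegrable_of_Icc hρs
  have hint2 : IntervalIntegrable (fun r => C * |Real.log r| ^ (-α) / r ^ 2) volume s (1/2) :=
    (contOn2 C α hs0 (by norm_num)).intervalIntegrable_of_Icc hs12
  have hK1 : (0:ℝ) ≤ C * (L/2) ^ (-α) := mul_nonneg hC.le (Real.rpow_nonneg (by linarith) _)
  have hK2 : (0:ℝ) ≤ C * Real.log 2 ^ (-α) := mul_nonneg hC.le (Real.rpow_nonneg hlog2.le _)
  have hb1 : ∫ r in ρ..s, C * |Real.log r| ^ (-α) / r ^ 2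
      ≤ ∫ r in ρ..s, (C * (L/2) ^ (-α)) / r ^ 2 := by
    apply intervalIntegral.integral_mono_on hρs hint1
    · apply ContinuousOn.intervalIntegrable_of_Icc hρs
      apply ContinuousOn.div continuousOn_const (continuous_pow 2).continuousOn
      intro x hx; exact pow_ne_zero 2 (lt_of_lt_of_le hρ0 hx.1).ne'
    · intro x hx
      have hx0 : 0 < x := lt_of_lt_of_le hρ0 hx.1
      have hx1 : x < 1 := by
        have := hx.2; linarith [hs12]
      have hlogx : Real.log x < 0 := Real.log_neg hx0 hx1
      have hxabs : |Real.log x| = -Real.log x := abs_of_neg hlogx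
      have hge : L/2 ≤ -Real.log x := by
        have := Real.log_le_log hx0 hx.2
        rw [← hlogs]; linarith [Real.log_le_log hx0 hx.2]
      have hrp : |Real.log x| ^ (-α) ≤ (L/2) ^ (-α) := by
        rw [hxabs]
        exact Real.rpow_le_rpow_of_nonpos (by linarith) hge (by linarith)
      apply div_le_div_of_nonneg_right ?_ (by positivity)
      · exact mul_le_mul_of_nonneg_left hrp hC.le
  have hb2 : ∫ r in s..(1/2:ℝ), C * |Real.log r| ^ (-α) / r ^ 2
      ≤ ∫ r in s..(1/2:ℝ), (C * Real.log 2 ^ (-α)) / r ^ 2 := by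
    apply intervalIntegral.integral_mono_on hs12 hint2
    · apply ContinuousOn.intervalIntegrable_of_Icc hs12
      apply ContinuousOn.div continuousOn_const (continuous_pow 2).continuousOn
      intro x hx; exact pow_ne_zero 2 (lt_of_lt_of_le hs0 hx.1).ne'
    · intro x hx
      have hx0 : 0 < x := lt_of_lt_of_le hs0 hx.1
      have hx1 : x < 1 := by linarith [hx.2]
      have hlogx : Real.log x < 0 := Real.log_neg hx0 hx1
      have hxabs : |Real.log x| = -Real.log x := abs_of_neg hlogx
      have hge : Real.log 2 ≤ -Real.log x := by
        have := Real.log_le_log hx0 hx.2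
        have h12 : Real.log (1/2 : ℝ) = -Real.log 2 := by
          rw [one_div, Real.log_inv]
        rw [h12] at this; linarith
      have hrp : |Real.log x| ^ (-α) ≤ Real.log 2 ^ (-α) := by
        rw [hxabs]
        exact Real.rpow_le_rpow_of_nonpos hlog2 hge (by linarith)
      apply div_le_div_of_nonneg_right ?_ (by positivity)
      · exact mul_le_mul_of_nonneg_left hrp hC.le
  have hv1 : ∫ r in ρ..s, (C * (L/2) ^ (-α)) / r ^ 2
      = C * (L/2) ^ (-α) / ρ - C * (L/2) ^ (-α) / s := ftc_inv_sq _ hρ0 hρs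
  have hv2 : ∫ r in s..(1/2:ℝ), (C * Real.log 2 ^ (-α)) / r ^ 2
      = C * Real.log 2 ^ (-α) / s - C * Real.log 2 ^ (-α) / (1/2) := ftc_inv_sq _ hs0 hs12
  have hsplit : ∫ r in ρ..(1/2:ℝ), C * |Real.log r| ^ (-α) / r ^ 2
      = (∫ r in ρ..s, C * |Real.log r| ^ (-α) / r ^ 2)
        + ∫ r in s..(1/2:ℝ), C * |Real.log r| ^ (-α) / r ^ 2 :=
    (intervalIntegral.integral_add_adjacent_intervals hint1 hint2).symm
  have htot : ∫ r in ρ..(1/2:ℝ), C * |Real.log r| ^ (-α) / r ^ 2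
      ≤ C * (L/2) ^ (-α) / ρ + C * Real.log 2 ^ (-α) / s := by
    rw [hsplit]
    have e1 : C * (L/2) ^ (-α) / ρ - C * (L/2) ^ (-α) / s ≤ C * (L/2) ^ (-α) / ρ := by
      have : 0 ≤ C * (L/2) ^ (-α) / s := by positivity
      linarith
    have e2 : C * Real.log 2 ^ (-α) / s - C * Real.log 2 ^ (-α) / (1/2)
        ≤ C * Real.log 2 ^ (-α) / s := by
      have : 0 ≤ C * Real.log 2 ^ (-α) / (1/2) := by positivity
      linarith
    calc _ ≤ (C * (L/2) ^ (-α) / ρ - C * (L/2) ^ (-α) / s)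
            + (C * Real.log 2 ^ (-α) / s - C * Real.log 2 ^ (-α) / (1/2)) := by
          rw [← hv1, ← hv2]; exact add_le_add hb1 hb2
      _ ≤ _ := by linarith
  have hmul : ρ * ∫ r in ρ..(1/2:ℝ), C * |Real.log r| ^ (-α) / r ^ 2
      ≤ C * (L/2) ^ (-α) + C * Real.log 2 ^ (-α) * s := by
    calc ρ * ∫ r in ρ..(1/2:ℝ), C * |Real.log r| ^ (-α) / r ^ 2
        ≤ ρ * (C * (L/2) ^ (-α) / ρ + C * Real.log 2 ^ (-α) / s) :=
          mul_le_mul_of_nonneg_left htot hρ0.le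
      _ = C * (L/2) ^ (-α) + C * Real.log 2 ^ (-α) * (ρ / s) := by
          field_simp
      _ = C * (L/2) ^ (-α) + C * Real.log 2 ^ (-α) * s := by
          rw [hs, Real.div_sqrt]
  -- now estimate the two pieces
  have hp1 : C * (L/2) ^ (-α) ≤ C * 2 ^ α * L ^ (1-α) := by
    have h1 : (L/2 : ℝ) ^ (-α) = L ^ (-α) * 2 ^ α := by
      rw [Real.div_rpow (by linarith) (by norm_num)]
      rw [Real.rpow_neg (by norm_num : (0:ℝ) ≤ 2)]
      field_simp
    rw [h1]
    have h2 : L ^ (-α) ≤ L ^ (1-α) :=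
      Real.rpow_le_rpow_of_exponent_le hL1 (by linarith)
    calc C * (L ^ (-α) * 2 ^ α) = (C * 2 ^ α) * L ^ (-α) := by ring
      _ ≤ (C * 2 ^ α) * L ^ (1-α) :=
          mul_le_mul_of_nonneg_left h2 (by positivity)
  have hp2 : C * Real.log 2 ^ (-α) * s ≤ C * L ^ (1-α) := by
    have hLL : L ^ (α-1) * L ^ (1-α) = 1 := by
      rw [← Real.rpow_add hL0]; norm_num
    have hcond' : s * L ^ (α-1) ≤ Real.log 2 ^ α := by
      rwa [habs] at hcond
    have hsle : s ≤ Real.log 2 ^ α * L ^ (1-α) := by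
      have := mul_le_mul_of_nonneg_right hcond' (Real.rpow_nonneg hL0.le (1-α))
      calc s = s * (L ^ (α-1) * L ^ (1-α)) := by rw [hLL]; ring
        _ = s * L ^ (α-1) * L ^ (1-α) := by ring
        _ ≤ Real.log 2 ^ α * L ^ (1-α) := this
    have hinv : Real.log 2 ^ (-α) * Real.log 2 ^ α = 1 := by
      rw [← Real.rpow_add hlog2]; norm_num
    calc C * Real.log 2 ^ (-α) * s ≤ C * Real.log 2 ^ (-α) * (Real.log 2 ^ α * L ^ (1-α)) := by
          apply mul_le_mul_of_nonneg_left hsle (by positivity)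
      _ = C * (Real.log 2 ^ (-α) * Real.log 2 ^ α) * L ^ (1-α) := by ring
      _ = C * L ^ (1-α) := by rw [hinv]; ring
  rw [habs]
  calc ρ * ∫ r in ρ..(1/2:ℝ), C * |Real.log r| ^ (-α) / r ^ 2
      ≤ C * (L/2) ^ (-α) + C * Real.log 2 ^ (-α) * s := hmul
    _ ≤ C * 2 ^ α * L ^ (1-α) + C * L ^ (1-α) := add_le_add hp1 hp2
    _ = (C * 2 ^ α + C) * (-Real.log ρ) ^ (1-α) := by rw [hL]; ring

lemma tendsto_cond (α : ℝ) (hα : 1 < α) :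
    Tendsto (fun ρ => Real.sqrt ρ * |Real.log ρ| ^ (α-1)) (nhdsWithin 0 (Set.Ioi 0)) (nhds 0) := by
  have hg : Tendsto (fun x : ℝ => x ^ (α-1) * Real.exp (-(1/2) * x)) atTop (nhds 0) :=
    tendsto_rpow_mul_exp_neg_mul_atTop_nhds_zero (α-1) (1/2) (by norm_num)
  have hcomp : Tendsto (fun ρ : ℝ => -Real.log ρ) (nhdsWithin 0 (Set.Ioi 0)) atTop :=
    tendsto_neg_atBot_atTop.comp Real.tendsto_log_nhdsGT_zero
  have := hg.comp hcomp
  apply this.congr'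
  filter_upwards [Ioo_mem_nhdsGT_of_mem (Set.mem_Ico.mpr ⟨le_refl (0:ℝ), one_pos⟩)] with ρ hρ
  have hρ0 : 0 < ρ := hρ.1
  have hlog : Real.log ρ < 0 := Real.log_neg hρ0 hρ.2
  simp only [Function.comp]
  rw [abs_of_neg hlog, Real.sqrt_eq_rpow, Real.rpow_def_of_pos hρ0, mul_comm]
  congr 2
  ring

theorem stmt5 (C α : ℝ) (hC : 0 < C) (hα : 1 < α) :
    ∃ C₁ > (0:ℝ), ∃ C₂ > (0:ℝ), ∃ ρ₁ ∈ Set.Ioo (0:ℝ) (1/2),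
      ∀ ρ ∈ Set.Ioo (0:ℝ) ρ₁,
        C₁ / |Real.log ρ| ^ (α - 1) ≤
          (∫ r in (0:ℝ)..ρ, (C * |Real.log r| ^ (-α)) / r)
            + ρ * ∫ r in ρ..(1/2:ℝ), (C * |Real.log r| ^ (-α)) / r ^ 2 ∧
        (∫ r in (0:ℝ)..ρ, (C * |Real.log r| ^ (-α)) / r)
            + ρ * ∫ r in ρ..(1/2:ℝ), (C * |Real.log r| ^ (-α)) / r ^ 2 ≤
          C₂ / |Real.log ρ| ^ (α - 1) := by
  have hα1 : 0 < α - 1 := by linarith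
  have hlog2 : 0 < Real.log 2 := Real.log_pos (by norm_num)
  -- eventual smallness condition
  have hev : ∀ᶠ ρ in nhdsWithin 0 (Set.Ioi (0:ℝ)),
      Real.sqrt ρ * |Real.log ρ| ^ (α-1) ≤ Real.log 2 ^ α :=
    (tendsto_cond α hα).eventually (eventually_le_nhds (by positivity))
  rw [eventually_iff, mem_nhdsGT_iff_exists_Ioo_subset] at hev
  obtain ⟨u, hu, hsub⟩ := hev
  refine ⟨C / (α-1), by positivity, C / (α-1) + (C * 2 ^ α + C), by positivity,
    min u (1/4), ⟨lt_min hu (by norm_num), by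
      calc min u (1/4 : ℝ) ≤ 1/4 := min_le_right _ _
        _ < 1/2 := by norm_num⟩, ?_⟩
  intro ρ hρ
  have hρ0 : 0 < ρ := hρ.1
  have hρ14 : ρ < 1/4 := lt_of_lt_of_le hρ.2 (min_le_right _ _)
  have hρu : ρ < u := lt_of_lt_of_le hρ.2 (min_le_left _ _)
  have hρ1 : ρ < 1 := by linarith
  have hcond : Real.sqrt ρ * |Real.log ρ| ^ (α-1) ≤ Real.log 2 ^ α :=
    hsub ⟨hρ0, hρu⟩
  have hlogρ : Real.log ρ < 0 := Real.log_neg hρ0 hρ1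
  have habs : |Real.log ρ| = -Real.log ρ := abs_of_neg hlogρ
  have hL0 : 0 < -Real.log ρ := by linarith
  -- value of the first integral
  have hfirst : ∫ r in (0:ℝ)..ρ, (C * |Real.log r| ^ (-α)) / r
      = C / (α-1) * (-Real.log ρ) ^ (1-α) := (improper C α hC hα hρ0 hρ1).2
  -- rewrite of the target constant
  have hLrw : ∀ K : ℝ, K / |Real.log ρ| ^ (α-1) = K * (-Real.log ρ) ^ (1-α) := by
    intro K
    rw [habs, show (1-α) = -(α-1) by ring, Real.rpow_neg hL0.le, div_eq_mul_inv]
  -- second integral nonneg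
  have hsecond_nonneg : 0 ≤ ρ * ∫ r in ρ..(1/2:ℝ), (C * |Real.log r| ^ (-α)) / r ^ 2 := by
    apply mul_nonneg hρ0.le
    apply intervalIntegral.integral_nonneg (by linarith : ρ ≤ 1/2)
    intro u hu'
    have hu0 : 0 < u := lt_of_lt_of_le hρ0 hu'.1
    positivity
  constructor
  · rw [hLrw, hfirst]
    linarith
  · rw [hLrw, hfirst]
    have hsec := secondBound C α hC hα hρ0 hρ14 hcond
    rw [habs] at hsec
    linarith
end

section
/- Let φ be an increasing continuous function with ∫₀₊ φ(r)/r dr < ∞ and let K(t,x) = (2πt)^{-d/2} e^{-|x|²/(2t)}. There is a constant C(d) such that for every ρ > 0: ∫₀^∞ ∫_{|z| ≤ ρ} (t)^{-(d+2)/2} e^{-|z|²/(2t)} φ(|z|) dz dt ≤ C(d) ∫₀^ρ φ(r)/r dr. -/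
open MeasureTheory Set Filter

open scoped ENNReal

namespace Stmt11Aux

/-- 1D lintegral change of variables. -/
theorem lintegral_image_eq_lintegral_abs_deriv_mul' {s : Set ℝ} {f f' : ℝ → ℝ}
    (hs : MeasurableSet s) (hf' : ∀ x ∈ s, HasDerivWithinAt f (f' x) s x)
    (hf : InjOn f s) (g : ℝ → ℝ≥0∞) :
    ∫⁻ x in f '' s, g x = ∫⁻ x in s, ENNReal.ofReal |f' x| * g (f x) := by
  simpa only [ContinuousLinearMap.det_toSpanSingleton] using
    lintegral_image_eq_lintegral_abs_det_fderiv_mul volume hs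
      (fun x hx => (hf' x hx).hasFDerivWithinAt) hf g

/-- Polar coordinates for the Lebesgue integral. -/
theorem lintegral_fun_norm_addHaar {E : Type*} [NormedAddCommGroup E] [NormedSpace ℝ E]
    [MeasurableSpace E] [BorelSpace E] [FiniteDimensional ℝ E] [Nontrivial E]
    (μ : Measure E) [μ.IsAddHaarMeasure] {f : ℝ → ℝ≥0∞} (hf : Measurable f) :
    ∫⁻ x, f ‖x‖ ∂μ = (Module.finrank ℝ E : ℝ≥0∞) * μ (Metric.ball 0 1) *
      ∫⁻ y in Ioi (0:ℝ), ENNReal.ofReal (y ^ (Module.finrank ℝ E - 1)) * f y := by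
  have h := μ.measurePreserving_homeomorphUnitSphereProd
  have hmeas : Measurable fun p : Metric.sphere (0:E) 1 × Ioi (0:ℝ) => f p.2 :=
    (hf.comp measurable_subtype_coe).comp measurable_snd
  calc
    ∫⁻ x, f ‖x‖ ∂μ = ∫⁻ x in {(0:E)}ᶜ, f ‖x‖ ∂μ := by
      rw [MeasureTheory.restrict_compl_singleton]
    _ = ∫⁻ x : ({(0:E)}ᶜ : Set E), f ‖(x:E)‖ ∂(μ.comap (↑)) :=
      (lintegral_subtype_comap (measurableSet_singleton _).compl _).symm
    _ = ∫⁻ p : Metric.sphere (0:E) 1 × Ioi (0:ℝ), f p.2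
          ∂(μ.toSphere.prod (.volumeIoiPow (Module.finrank ℝ E - 1))) := by
      rw [← h.lintegral_comp hmeas]
      refine lintegral_congr fun x => ?_
      simp
    _ = μ.toSphere univ *
          ∫⁻ y : Ioi (0:ℝ), f y ∂(Measure.volumeIoiPow (Module.finrank ℝ E - 1)) := by
      rw [lintegral_prod _ hmeas.aemeasurable]
      simp [lintegral_const, mul_comm]
    _ = μ.toSphere univ *
          ∫⁻ y in Ioi (0:ℝ), ENNReal.ofReal (y ^ (Module.finrank ℝ E - 1)) * f y := by
      have hg : Measurable fun y : Ioi (0:ℝ) => f ↑y := hf.comp measurable_subtype_coe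
      rw [Measure.volumeIoiPow,
        lintegral_withDensity_eq_lintegral_mul _
          ((measurable_subtype_coe.pow_const _).ennreal_ofReal) hg]
      congr 1
      exact lintegral_subtype_comap measurableSet_Ioi
        (fun y : ℝ => ENNReal.ofReal (y ^ (Module.finrank ℝ E - 1)) * f y)
    _ = _ := by
      rw [Measure.toSphere_apply_univ]

theorem lintegral_Gamma {s : ℝ} (hs : 0 < s) :
    ∫⁻ x in Ioi (0:ℝ), ENNReal.ofReal (Real.exp (-x) * x ^ (s - 1))
      = ENNReal.ofReal (Real.Gamma s) := by
  rw [Real.Gamma_eq_integral hs]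
  refine (ofReal_integral_eq_lintegral_ofReal (Real.GammaIntegral_convergent hs) ?_).symm
  filter_upwards [ae_restrict_mem measurableSet_Ioi] with x hx
  have hx' : (0:ℝ) < x := hx
  positivity

theorem inner_t_integral (d : ℕ) (hd : 1 ≤ d) {r : ℝ} (hr : 0 < r) :
    ∫⁻ t in Ioi (0:ℝ), ENNReal.ofReal (t ^ (-((d:ℝ) + 2) / 2) * Real.exp (-r ^ 2 / (2 * t)))
      = ENNReal.ofReal ((2:ℝ) ^ ((d:ℝ)/2) * Real.Gamma ((d:ℝ)/2) * r ^ (-(d:ℝ))) := by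
  have hdR : (0:ℝ) < (d:ℝ) := by exact_mod_cast hd
  set c : ℝ := -((d:ℝ) + 2) / 2 with hc
  set a : ℝ := r ^ 2 / 2 with ha
  have ha0 : 0 < a := by positivity
  set f : ℝ → ℝ := fun t => a / t with hfdef
  set f' : ℝ → ℝ := fun t => -(a / t ^ 2) with hf'def
  have hderiv : ∀ x ∈ Ioi (0:ℝ), HasDerivWithinAt f (f' x) (Ioi 0) x := by
    intro x hx
    have hx0 : x ≠ 0 := (ne_of_gt hx)
    have h1 : HasDerivAt f (a * (-(x ^ 2)⁻¹)) x := by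
      simpa [hfdef, div_eq_mul_inv] using (hasDerivAt_inv hx0).const_mul a
    have h2 : f' x = a * (-(x ^ 2)⁻¹) := by
      simp only [hf'def, div_eq_mul_inv]
      ring
    rw [h2]
    exact h1.hasDerivWithinAt
  have hinj : InjOn f (Ioi (0:ℝ)) := by
    intro x hx y hy hxy
    have hx0 : (0:ℝ) < x := hx
    have hy0 : (0:ℝ) < y := hy
    have e1 : x = a / f x := by
      simp only [hfdef]
      field_simp
    have e2 : y = a / f y := by
      simp only [hfdef]
      field_simp
    rw [e1, e2, hxy]
  have himg : f '' Ioi (0:ℝ) = Ioi (0:ℝ) := by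
    ext u
    constructor
    · rintro ⟨t, ht, rfl⟩
      exact div_pos ha0 ht
    · intro hu
      have hu0 : (0:ℝ) < u := hu
      refine ⟨a / u, div_pos ha0 hu0, ?_⟩
      simp only [hfdef]
      field_simp
  set g : ℝ → ℝ≥0∞ := fun u =>
    ENNReal.ofReal ((a / u) ^ c * Real.exp (-u) * (a / u ^ 2)) with hgdef
  have key := lintegral_image_eq_lintegral_abs_deriv_mul' measurableSet_Ioi hderiv hinj g
  rw [himg] at key
  -- RHS of key equals the LHS of our goal
  have hrhs : ∫⁻ t in Ioi (0:ℝ), ENNReal.ofReal |f' t| * g (f t)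
      = ∫⁻ t in Ioi (0:ℝ),
          ENNReal.ofReal (t ^ (-((d:ℝ) + 2) / 2) * Real.exp (-r ^ 2 / (2 * t))) := by
    refine setLIntegral_congr_fun measurableSet_Ioi (fun t ht => ?_)
    have ht0 : (0:ℝ) < t := ht
    have h1 : a / (a / t) = t := by field_simp
    have habs : |f' t| = a / t ^ 2 := by
      rw [hf'def, abs_neg, abs_of_pos (by positivity)]
    simp only [hgdef, hfdef]
    rw [habs, ← ENNReal.ofReal_mul (by positivity)]
    congr 1
    rw [h1]
    have harg : -(a / t) = -r ^ 2 / (2 * t) := by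
      rw [ha]; ring
    rw [harg]
    have h2 : a / t ^ 2 ≠ 0 := by positivity
    field_simp
    rw [hc]; ring_nf
  rw [hrhs] at key
  rw [← key]
  -- now compute ∫⁻ u in Ioi 0, g u
  have hgu : ∀ᵐ u ∂(volume.restrict (Ioi (0:ℝ))),
      g u = ENNReal.ofReal (a ^ c * a) *
        ENNReal.ofReal (Real.exp (-u) * u ^ ((d:ℝ)/2 - 1)) := by
    filter_upwards [ae_restrict_mem measurableSet_Ioi] with u hu
    have hu0 : (0:ℝ) < u := hu
    simp only [hgdef]
    rw [← ENNReal.ofReal_mul (by positivity)]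
    congr 1
    have hdiv : (a / u) ^ c = a ^ c * u ^ (-c) := by
      rw [Real.div_rpow ha0.le hu0.le, div_eq_mul_inv, ← Real.rpow_neg hu0.le]
    have hu2 : a / u ^ 2 = a * u ^ (-(2:ℝ)) := by
      rw [Real.rpow_neg hu0.le, ← Real.rpow_natCast u 2]
      push_cast
      rw [div_eq_mul_inv]
    rw [hdiv, hu2]
    have hexp : u ^ (-c) * u ^ (-(2:ℝ)) = u ^ ((d:ℝ)/2 - 1) := by
      rw [← Real.rpow_add hu0]
      congr 1
      rw [hc]; ring
    calc a ^ c * u ^ (-c) * Real.exp (-u) * (a * u ^ (-(2:ℝ)))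
        = (a ^ c * a) * (Real.exp (-u) * (u ^ (-c) * u ^ (-(2:ℝ)))) := by ring
      _ = a ^ c * a * (Real.exp (-u) * u ^ ((d:ℝ)/2 - 1)) := by rw [hexp]
  rw [lintegral_congr_ae hgu]
  rw [lintegral_const_mul' _ _ ENNReal.ofReal_ne_top,
    lintegral_Gamma (by positivity : (0:ℝ) < (d:ℝ)/2),
    ← ENNReal.ofReal_mul (by positivity)]
  congr 1
  have hac : a ^ c * a = (2:ℝ) ^ ((d:ℝ)/2) * r ^ (-(d:ℝ)) := by
    have h1 : a ^ c * a = a ^ (c + 1) := by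
      rw [Real.rpow_add ha0, Real.rpow_one]
    have hc1 : c + 1 = -((d:ℝ)/2) := by rw [hc]; ring
    have h2 : a ^ (-((d:ℝ)/2)) = (2:ℝ) ^ ((d:ℝ)/2) * r ^ (-(d:ℝ)) := by
      rw [ha, Real.div_rpow (by positivity) (by norm_num),
        Real.rpow_neg (by positivity), Real.rpow_neg (by norm_num : (0:ℝ) ≤ 2)]
      rw [← Real.rpow_natCast r 2, ← Real.rpow_mul hr.le]
      push_cast
      rw [show (2:ℝ) * ((d:ℝ)/2) = (d:ℝ) by ring, Real.rpow_neg hr.le,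
        div_eq_mul_inv, inv_inv]
      ring
    rw [h1, hc1, h2]
  rw [hac]
  ring

theorem integrableOn_div_aux (φ : ℝ → ℝ) (hcont : ContinuousOn φ (Set.Ici 0))
    (hdini : ∃ r₁ > (0:ℝ), MeasureTheory.IntegrableOn (fun r => φ r / r) (Set.Ioc 0 r₁))
    {ρ : ℝ} (hρ : 0 < ρ) :
    IntegrableOn (fun r => φ r / r) (Set.Ioc 0 ρ) := by
  obtain ⟨r₁, hr₁, hint⟩ := hdini
  rcases le_or_gt ρ r₁ with h | h
  · exact hint.mono_set (Ioc_subset_Ioc_right h)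
  · have h2 : IntegrableOn (fun r => φ r / r) (Icc r₁ ρ) := by
      refine ContinuousOn.integrableOn_compact isCompact_Icc ?_
      refine ContinuousOn.div (hcont.mono ?_) continuousOn_id ?_
      · intro x hx; exact le_trans hr₁.le hx.1
      · intro x hx; exact (lt_of_lt_of_le hr₁ hx.1).ne'
    have : Ioc (0:ℝ) ρ = Ioc 0 r₁ ∪ Ioc r₁ ρ := (Ioc_union_Ioc_eq_Ioc hr₁.le h.le).symm
    rw [IntegrableOn, this]
    exact (hint.union (h2.mono_set Ioc_subset_Icc_self))

end Stmt11Aux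

open Stmt11Aux

theorem stmt11 (d : ℕ) (hd : 1 ≤ d) (φ : ℝ → ℝ)
    (hmono : MonotoneOn φ (Set.Ici 0)) (hcont : ContinuousOn φ (Set.Ici 0))
    (hnonneg : ∀ r, 0 ≤ r → 0 ≤ φ r)
    (hdini : ∃ r₁ > (0:ℝ), MeasureTheory.IntegrableOn (fun r => φ r / r) (Set.Ioc 0 r₁)) :
    ∃ C > (0:ℝ), ∀ ρ > (0:ℝ),
      (∫⁻ t in Set.Ioi (0:ℝ),
          ∫⁻ z in {z : EuclideanSpace ℝ (Fin d) | ‖z‖ ≤ ρ},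
            ENNReal.ofReal (t ^ (-((d:ℝ) + 2) / 2) * Real.exp (-‖z‖ ^ 2 / (2 * t)) * φ ‖z‖))
        ≤ ENNReal.ofReal (C * ∫ r in Set.Ioc (0:ℝ) ρ, φ r / r) := by
  have hdR : (0:ℝ) < (d:ℝ) := by exact_mod_cast hd
  -- modified φ, continuous on all of ℝ
  set ψ : ℝ → ℝ := fun r => φ (max r 0) with hψdef
  have hψc : Continuous ψ :=
    hcont.comp_continuous (continuous_id.max continuous_const) (fun x => Set.mem_Ici.2 (le_max_right _ _))
  have hψnn : ∀ r, 0 ≤ ψ r := fun r => hnonneg _ (le_max_right _ _)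
  have hψeq : ∀ r, 0 ≤ r → ψ r = φ r := fun r hr => by
    simp [hψdef, max_eq_left hr]
  set Cd : ℝ := (2:ℝ) ^ ((d:ℝ)/2) * Real.Gamma ((d:ℝ)/2) with hCddef
  have hCdpos : 0 < Cd :=
    mul_pos (Real.rpow_pos_of_pos two_pos _) (Real.Gamma_pos_of_pos (by positivity))
  haveI : Nonempty (Fin d) := ⟨⟨0, hd⟩⟩
  haveI hnt : Nontrivial (EuclideanSpace ℝ (Fin d)) := inferInstance
  set volB : ℝ≥0∞ := volume (Metric.ball (0 : EuclideanSpace ℝ (Fin d)) 1) with hvolB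
  have hBfin : volB ≠ ⊤ := measure_ball_lt_top.ne
  have hBpos : 0 < (volB).toReal :=
    ENNReal.toReal_pos (Metric.measure_ball_pos volume 0 one_pos).ne' hBfin
  refine ⟨(d:ℝ) * volB.toReal * Cd, by positivity, ?_⟩
  intro ρ hρ
  set S : Set (EuclideanSpace ℝ (Fin d)) := {z | ‖z‖ ≤ ρ} with hSdef
  have hS : MeasurableSet S := by
    have : S = Metric.closedBall 0 ρ := by
      ext z; simp [hSdef, Metric.mem_closedBall, dist_zero_right]
    rw [this]; exact measurableSet_closedBall
  -- integrability of ψ r / r on Ioc 0 ρ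
  have hIntφ : IntegrableOn (fun r => φ r / r) (Ioc 0 ρ) :=
    integrableOn_div_aux φ hcont hdini hρ
  have hInt : IntegrableOn (fun r => ψ r / r) (Ioc 0 ρ) := by
    refine hIntφ.congr_fun (fun x hx => ?_) measurableSet_Ioc
    rw [hψeq x hx.1.le]
  have hIntEq : ∫ r in Ioc (0:ℝ) ρ, ψ r / r = ∫ r in Ioc (0:ℝ) ρ, φ r / r := by
    refine setIntegral_congr_fun measurableSet_Ioc (fun x hx => ?_)
    rw [hψeq x hx.1.le]
  -- replace φ by ψ in the integrand
  have hrw : (∫⁻ t in Set.Ioi (0:ℝ), ∫⁻ z in S,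
        ENNReal.ofReal (t ^ (-((d:ℝ) + 2) / 2) * Real.exp (-‖z‖ ^ 2 / (2 * t)) * φ ‖z‖))
      = ∫⁻ t in Set.Ioi (0:ℝ), ∫⁻ z in S,
        ENNReal.ofReal (t ^ (-((d:ℝ) + 2) / 2) * Real.exp (-‖z‖ ^ 2 / (2 * t)) * ψ ‖z‖) := by
    refine lintegral_congr fun t => lintegral_congr fun z => ?_
    rw [hψeq _ (norm_nonneg z)]
  rw [hrw]
  -- measurability of the two-variable integrand
  have hFm : Measurable (fun p : ℝ × EuclideanSpace ℝ (Fin d) =>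
      ENNReal.ofReal (p.1 ^ (-((d:ℝ) + 2) / 2) * Real.exp (-‖p.2‖ ^ 2 / (2 * p.1)) * ψ ‖p.2‖)) := by
    refine Measurable.ennreal_ofReal ?_
    refine Measurable.mul (Measurable.mul ?_ ?_) ?_
    · exact measurable_fst.pow_const _
    · exact Real.measurable_exp.comp
        (((measurable_snd.norm.pow_const 2).neg).div (measurable_const.mul measurable_fst))
    · exact hψc.measurable.comp measurable_snd.norm
  -- swap the order of integration
  rw [lintegral_lintegral_swap hFm.aemeasurable]
  -- a.e. z is nonzero
  have hz0 : ∀ᵐ z : EuclideanSpace ℝ (Fin d) ∂(volume.restrict S), z ≠ 0 := by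
    refine ae_restrict_of_ae ?_
    have he : {z : EuclideanSpace ℝ (Fin d) | ¬ z ≠ 0} = {0} := by ext z; simp
    rw [ae_iff, he, measure_singleton]
  -- inner integral computation
  have hinner : ∀ z : EuclideanSpace ℝ (Fin d), z ≠ 0 →
      (∫⁻ t in Ioi (0:ℝ),
        ENNReal.ofReal (t ^ (-((d:ℝ) + 2) / 2) * Real.exp (-‖z‖ ^ 2 / (2 * t)) * ψ ‖z‖))
      = ENNReal.ofReal (Cd * ‖z‖ ^ (-(d:ℝ)) * ψ ‖z‖) := by
    intro z hz
    have hr : 0 < ‖z‖ := norm_pos_iff.2 hz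
    calc (∫⁻ t in Ioi (0:ℝ),
          ENNReal.ofReal (t ^ (-((d:ℝ) + 2) / 2) * Real.exp (-‖z‖ ^ 2 / (2 * t)) * ψ ‖z‖))
        = ∫⁻ t in Ioi (0:ℝ),
            ENNReal.ofReal (t ^ (-((d:ℝ) + 2) / 2) * Real.exp (-‖z‖ ^ 2 / (2 * t)))
              * ENNReal.ofReal (ψ ‖z‖) := by
          refine setLIntegral_congr_fun measurableSet_Ioi (fun t ht => ?_)
          have ht0 : (0:ℝ) < t := ht
          rw [← ENNReal.ofReal_mul (by positivity)]
      _ = (∫⁻ t in Ioi (0:ℝ),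
            ENNReal.ofReal (t ^ (-((d:ℝ) + 2) / 2) * Real.exp (-‖z‖ ^ 2 / (2 * t))))
              * ENNReal.ofReal (ψ ‖z‖) :=
          lintegral_mul_const' _ _ ENNReal.ofReal_ne_top
      _ = ENNReal.ofReal (Cd * ‖z‖ ^ (-(d:ℝ))) * ENNReal.ofReal (ψ ‖z‖) := by
          rw [inner_t_integral d hd hr, hCddef]
      _ = ENNReal.ofReal (Cd * ‖z‖ ^ (-(d:ℝ)) * ψ ‖z‖) :=
          (ENNReal.ofReal_mul (by positivity)).symm
  -- compute the z-integral via polar coordinates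
  set g : ℝ → ℝ≥0∞ := fun y =>
    Set.indicator (Iic ρ) (fun y => ENNReal.ofReal (Cd * y ^ (-(d:ℝ)) * ψ y)) y with hgdef
  have hgmeas : Measurable g := by
    refine Measurable.indicator ?_ measurableSet_Iic
    exact ((measurable_const.mul (measurable_id.pow_const _)).mul hψc.measurable).ennreal_ofReal
  have step1 : (∫⁻ z in S, ∫⁻ t in Ioi (0:ℝ),
        ENNReal.ofReal (t ^ (-((d:ℝ) + 2) / 2) * Real.exp (-‖z‖ ^ 2 / (2 * t)) * ψ ‖z‖))
      = ∫⁻ z : EuclideanSpace ℝ (Fin d), g ‖z‖ := by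
    have e1 : (∫⁻ z in S, ∫⁻ t in Ioi (0:ℝ),
          ENNReal.ofReal (t ^ (-((d:ℝ) + 2) / 2) * Real.exp (-‖z‖ ^ 2 / (2 * t)) * ψ ‖z‖))
        = ∫⁻ z in S, ENNReal.ofReal (Cd * ‖z‖ ^ (-(d:ℝ)) * ψ ‖z‖) :=
      lintegral_congr_ae (hz0.mono fun z hz => hinner z hz)
    rw [e1, ← lintegral_indicator hS]
    refine lintegral_congr fun z => ?_
    simp only [hgdef]
    by_cases hzρ : ‖z‖ ≤ ρ
    · rw [Set.indicator_of_mem (show z ∈ S from hzρ),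
        Set.indicator_of_mem (show ‖z‖ ∈ Iic ρ from hzρ)]
    · rw [Set.indicator_of_notMem (show z ∉ S from hzρ),
        Set.indicator_of_notMem (show ‖z‖ ∉ Iic ρ from hzρ)]
  rw [step1]
  have hpolar := lintegral_fun_norm_addHaar
    (volume : Measure (EuclideanSpace ℝ (Fin d))) hgmeas
  rw [finrank_euclideanSpace_fin] at hpolar
  rw [hpolar]
  -- compute the radial integral
  have step2 : (∫⁻ y in Ioi (0:ℝ), ENNReal.ofReal (y ^ (d - 1)) * g y)
      = ∫⁻ y in Ioc (0:ℝ) ρ, ENNReal.ofReal (Cd * (ψ y / y)) := by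
    have e2 : (∫⁻ y in Ioi (0:ℝ), ENNReal.ofReal (y ^ (d - 1)) * g y)
        = ∫⁻ y in Ioi (0:ℝ), Set.indicator (Iic ρ)
            (fun y => ENNReal.ofReal (y ^ (d - 1)) *
              ENNReal.ofReal (Cd * y ^ (-(d:ℝ)) * ψ y)) y := by
      refine lintegral_congr fun y => ?_
      simp only [hgdef]
      by_cases hy : y ∈ Iic ρ
      · rw [Set.indicator_of_mem hy, Set.indicator_of_mem hy]
      · rw [Set.indicator_of_notMem hy, Set.indicator_of_notMem hy, mul_zero]
    rw [e2, lintegral_indicator measurableSet_Iic, Measure.restrict_restrict measurableSet_Iic]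
    have e3 : Iic ρ ∩ Ioi (0:ℝ) = Ioc 0 ρ := by
      rw [Set.inter_comm, Set.Ioi_inter_Iic]
    rw [e3]
    refine setLIntegral_congr_fun measurableSet_Ioc (fun y hy => ?_)
    have hy0 : (0:ℝ) < y := hy.1
    rw [← ENNReal.ofReal_mul (by positivity)]
    congr 1
    have hpow : (y:ℝ) ^ (d - 1) = y ^ ((d:ℝ) - 1) := by
      rw [← Real.rpow_natCast y (d - 1), Nat.cast_sub hd, Nat.cast_one]
    rw [hpow]
    have : y ^ ((d:ℝ) - 1) * y ^ (-(d:ℝ)) = y⁻¹ := by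
      rw [← Real.rpow_add hy0]
      rw [show (d:ℝ) - 1 + -(d:ℝ) = -1 by ring, Real.rpow_neg_one]
    calc y ^ ((d:ℝ) - 1) * (Cd * y ^ (-(d:ℝ)) * ψ y)
        = Cd * (y ^ ((d:ℝ) - 1) * y ^ (-(d:ℝ))) * ψ y := by ring
      _ = Cd * y⁻¹ * ψ y := by rw [this]
      _ = Cd * (ψ y / y) := by rw [div_eq_mul_inv]; ring
  rw [step2]
  -- convert the radial lintegral to a Bochner integral
  have step3 : (∫⁻ y in Ioc (0:ℝ) ρ, ENNReal.ofReal (Cd * (ψ y / y)))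
      = ENNReal.ofReal (∫ y in Ioc (0:ℝ) ρ, Cd * (ψ y / y)) := by
    refine (ofReal_integral_eq_lintegral_ofReal (hInt.const_mul Cd) ?_).symm
    filter_upwards [ae_restrict_mem measurableSet_Ioc] with y hy
    exact mul_nonneg hCdpos.le (div_nonneg (hψnn y) hy.1.le)
  rw [step3, integral_const_mul, hIntEq]
  -- final constant juggling
  have hfin : ((d:ℝ≥0∞)) * volB * ENNReal.ofReal (Cd * ∫ r in Ioc (0:ℝ) ρ, φ r / r)
      = ENNReal.ofReal ((d:ℝ) * volB.toReal * Cd * ∫ r in Ioc (0:ℝ) ρ, φ r / r) := by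
    have h1 : ((d:ℝ≥0∞)) = ENNReal.ofReal (d:ℝ) := by
      rw [ENNReal.ofReal_natCast]
    have h2 : volB = ENNReal.ofReal volB.toReal := (ENNReal.ofReal_toReal hBfin).symm
    rw [h1]
    nth_rewrite 1 [h2]
    rw [← ENNReal.ofReal_mul (by positivity), ← ENNReal.ofReal_mul (by positivity)]
    congr 1
    ring
  exact le_of_eq hfin
end
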